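/- arXiv:2205.13843 — 4 statements merged into one kernel-verified Lean document; each statement's English description precedes it below -/
import Mathlib

section
/- Let T := P_{M_m} ⋯ P_{M_1} be the product of orthogonal projections onto closed linear subspaces M_1,...,M_m of a real Hilbert space H, and let T_bold := P_{M_m^m} ⋯ P_{M_1^m} be the corresponding product in H^m. Then for every k ≥ 1, the operator norm ‖(T_bold^k − T_bold^{k−1}) P_D‖ equals ‖T^k − T^{k−1}‖. -/
noncomputable section
open Filter

variable {H : Type} [NormedAddCommGroup H] [InnerProductSpace ℝ H] [CompleteSpace H]

/-- The orthogonal projection onto a subspace `K`, viewed as an operator `H →L[ℝ] H`. -/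
def projL (K : Submodule ℝ H) [K.HasOrthogonalProjection] : H →L[ℝ] H :=
  K.subtypeL.comp K.orthogonalProjectionOnto

instance piLpCompleteSpace (m : ℕ) : CompleteSpace (PiLp 2 fun _ : Fin m => H) :=
  inferInstance

/-- `M₁ × ⋯ × Mₘ` as a submodule of the product Hilbert space `H^m = PiLp 2 (fun _ : Fin m => H)`.
(The paper equips `H^m` with the inner product `(1/m)∑⟨xᵢ,yᵢ⟩`; this is a positive scalar
multiple of the `PiLp 2` inner product, hence it induces the very same orthogonal projections,
orthogonal complements, and operator norms of maps `H^m → H^m`.) -/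
def prodSubmodule {m : ℕ} (M : Fin m → Submodule ℝ H) :
    Submodule ℝ (PiLp 2 fun _ : Fin m => H) :=
  Submodule.comap (WithLp.linearEquiv 2 ℝ (∀ _ : Fin m, H)).toLinearMap
    (Submodule.pi Set.univ M)

instance prodSubmoduleComplete {m : ℕ} (M : Fin m → Submodule ℝ H)
    [∀ i, CompleteSpace (M i)] : CompleteSpace (prodSubmodule M) := by
  have hcl : ∀ i, IsClosed ((M i : Set H)) := fun i =>
    (completeSpace_coe_iff_isComplete.mp inferInstance).isClosed
  have h : IsClosed ((prodSubmodule M : Set (PiLp 2 fun _ : Fin m => H))) := by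
    have he : (prodSubmodule M : Set (PiLp 2 fun _ : Fin m => H)) =
        ⋂ i, (fun x : PiLp 2 (fun _ : Fin m => H) =>
          (WithLp.equiv 2 (∀ _ : Fin m, H)) x i) ⁻¹' (M i : Set H) := by
      ext x
      simp [prodSubmodule, Submodule.mem_pi, Set.mem_iInter]
    rw [he]
    exact isClosed_iInter fun i =>
      (hcl i).preimage ((continuous_apply i).comp (PiLp.continuous_ofLp 2 _))
  exact h.completeSpace_coe

/-- The diagonal `{(x,…,x) : x ∈ H}` as a submodule of the product Hilbert space `H^m`. -/
def diagSubmodule (H : Type) [NormedAddCommGroup H] [InnerProductSpace ℝ H] (m : ℕ) :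
    Submodule ℝ (PiLp 2 fun _ : Fin m => H) :=
  LinearMap.range
    (((WithLp.linearEquiv 2 ℝ (∀ _ : Fin m, H)).symm.toLinearMap).comp
      (LinearMap.pi fun _ : Fin m => LinearMap.id))

instance diagSubmoduleComplete (m : ℕ) : CompleteSpace (diagSubmodule H m) := by
  have h : IsClosed ((diagSubmodule H m : Set (PiLp 2 fun _ : Fin m => H))) := by
    have he : (diagSubmodule H m : Set (PiLp 2 fun _ : Fin m => H)) =
        ⋂ (i : Fin m) (j : Fin m),
          {x : PiLp 2 (fun _ : Fin m => H) |
            (WithLp.equiv 2 (∀ _ : Fin m, H)) x i = (WithLp.equiv 2 (∀ _ : Fin m, H)) x j} := by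
      ext x
      simp only [Set.mem_iInter, Set.mem_setOf_eq, SetLike.mem_coe, diagSubmodule,
        LinearMap.mem_range, LinearMap.coe_comp, Function.comp_apply]
      constructor
      · rintro ⟨y, rfl⟩ i j
        rfl
      · intro h
        rcases Nat.eq_zero_or_pos m with hm | hm
        · subst hm
          refine ⟨0, ?_⟩
          apply (WithLp.equiv 2 (∀ _ : Fin 0, H)).injective
          funext j
          exact j.elim0
        · refine ⟨(WithLp.equiv 2 (∀ _ : Fin m, H)) x ⟨0, hm⟩, ?_⟩
          apply (WithLp.equiv 2 (∀ _ : Fin m, H)).injective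
          funext j
          exact h ⟨0, hm⟩ j
    rw [he]
    exact isClosed_iInter fun i => isClosed_iInter fun j =>
      isClosed_eq ((continuous_apply i).comp (PiLp.continuous_ofLp 2 _))
        ((continuous_apply j).comp (PiLp.continuous_ofLp 2 _))
  exact h.completeSpace_coe

/-- The product `P_{m-1} ∘ ⋯ ∘ P_0` of the operators `P i` (so `P 0` acts first);
for `P i = projL (M i)` this is the cyclic-projections operator `T = P_{M_m} ⋯ P_{M_1}`. -/
def cyclicProd {E : Type} [NormedAddCommGroup E] [NormedSpace ℝ E] {m : ℕ}
    (P : Fin m → (E →L[ℝ] E)) : E →L[ℝ] E :=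
  (List.ofFn P).foldl (fun acc p => p.comp acc) (ContinuousLinearMap.id ℝ E)


section Aux

variable {m : ℕ}

/-- The componentwise lift of `A : H →L[ℝ] H` to `H^m`, as a linear map. -/
def liftLinear (m : ℕ) (A : H →L[ℝ] H) :
    (PiLp 2 fun _ : Fin m => H) →ₗ[ℝ] (PiLp 2 fun _ : Fin m => H) where
  toFun x := WithLp.toLp 2 fun i => A (x i)
  map_add' x y := by ext i; exact A.map_add _ _
  map_smul' c x := by ext i; exact A.map_smul _ _

lemma liftLinear_norm_le (A : H →L[ℝ] H) (x : PiLp 2 fun _ : Fin m => H) :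
    ‖liftLinear m A x‖ ≤ ‖A‖ * ‖x‖ := by
  rw [PiLp.norm_eq_of_L2, PiLp.norm_eq_of_L2]
  have h1 : ∑ i, ‖(liftLinear m A x) i‖ ^ 2 ≤ ∑ i, ‖A‖ ^ 2 * ‖x i‖ ^ 2 := by
    refine Finset.sum_le_sum fun i _ => ?_
    have e : (liftLinear m A x) i = A (x i) := rfl
    rw [e]
    calc ‖A (x i)‖ ^ 2 ≤ (‖A‖ * ‖x i‖) ^ 2 :=
          pow_le_pow_left₀ (norm_nonneg _) (A.le_opNorm (x i)) 2
      _ = ‖A‖ ^ 2 * ‖x i‖ ^ 2 := mul_pow _ _ _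
  calc √(∑ i, ‖(liftLinear m A x) i‖ ^ 2) ≤ √(∑ i, ‖A‖ ^ 2 * ‖x i‖ ^ 2) :=
        Real.sqrt_le_sqrt h1
    _ = ‖A‖ * √(∑ i, ‖x i‖ ^ 2) := by
        rw [← Finset.mul_sum, Real.sqrt_mul (sq_nonneg _), Real.sqrt_sq (norm_nonneg A)]

/-- The componentwise lift of `A : H →L[ℝ] H` to `H^m`. -/
def liftL (m : ℕ) (A : H →L[ℝ] H) :
    (PiLp 2 fun _ : Fin m => H) →L[ℝ] (PiLp 2 fun _ : Fin m => H) :=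
  LinearMap.mkContinuous (liftLinear m A) ‖A‖ (liftLinear_norm_le A)

@[simp] lemma liftL_apply (A : H →L[ℝ] H) (x : PiLp 2 fun _ : Fin m => H) (i : Fin m) :
    liftL m A x i = A (x i) := rfl

lemma liftL_norm_le (A : H →L[ℝ] H) (x : PiLp 2 fun _ : Fin m => H) :
    ‖liftL m A x‖ ≤ ‖A‖ * ‖x‖ := liftLinear_norm_le A x

lemma liftL_id : liftL m (ContinuousLinearMap.id ℝ H) = ContinuousLinearMap.id ℝ _ := by
  ext x; rfl

lemma liftL_comp (A B : H →L[ℝ] H) :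
    liftL m (A.comp B) = (liftL m A).comp (liftL m B) := by
  ext x; rfl

lemma liftL_mul (A B : H →L[ℝ] H) : liftL m (A * B) = liftL m A * liftL m B :=
  liftL_comp A B

lemma liftL_sub (A B : H →L[ℝ] H) : liftL m (A - B) = liftL m A - liftL m B := by
  ext x i
  exact rfl

lemma liftL_pow (A : H →L[ℝ] H) (n : ℕ) : liftL m (A ^ n) = (liftL m A) ^ n := by
  induction n with
  | zero => simpa [ContinuousLinearMap.one_def] using (liftL_id (m := m) (H := H))
  | succ n ih => rw [pow_succ, pow_succ, liftL_mul, ih]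

lemma mem_prodSubmodule {M : Fin m → Submodule ℝ H} {x : PiLp 2 fun _ : Fin m => H} :
    x ∈ prodSubmodule M ↔ ∀ i, x i ∈ M i := by
  simp [prodSubmodule, Submodule.mem_pi]

lemma projL_prod (K : Submodule ℝ H) [CompleteSpace K] :
    projL (prodSubmodule fun _ : Fin m => K) = liftL m (projL K) := by
  refine ContinuousLinearMap.ext fun x => ?_
  refine (Submodule.eq_starProjection_of_mem_orthogonal (K := prodSubmodule fun _ : Fin m => K) ?_ ?_)
  · exact mem_prodSubmodule.mpr fun i => (K.orthogonalProjectionOnto (x i)).2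
  · rw [Submodule.mem_orthogonal]
    intro u hu
    rw [PiLp.inner_apply]
    refine Finset.sum_eq_zero fun i _ => ?_
    have h1 : x i - (K.orthogonalProjectionOnto (x i) : H) ∈ Kᗮ :=
      K.sub_starProjection_mem_orthogonal (x i)
    have h2 : u i ∈ K := mem_prodSubmodule.mp hu i
    exact (Submodule.mem_orthogonal K _).mp h1 (u i) h2

lemma foldl_liftL (l : List (H →L[ℝ] H)) (a : H →L[ℝ] H) :
    (l.map (liftL m)).foldl (fun acc p => p.comp acc) (liftL m a) =
      liftL m (l.foldl (fun acc p => p.comp acc) a) := by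
  induction l generalizing a with
  | nil => rfl
  | cons p l ih =>
      simp only [List.map_cons, List.foldl_cons]
      rw [← liftL_comp, ih]

lemma cyclicProd_liftL (P : Fin m → (H →L[ℝ] H)) :
    cyclicProd (fun i => liftL m (P i)) = liftL m (cyclicProd P) := by
  unfold cyclicProd
  have h : (List.ofFn fun i => liftL m (P i)) = (List.ofFn P).map (liftL m) :=
    (List.map_ofFn (f := P) (g := liftL m)).symm
  rw [h, ← liftL_id (m := m), foldl_liftL]

/-- The diagonal vector `(w,…,w)` in `H^m`. -/
def diagVec (m : ℕ) (w : H) : PiLp 2 fun _ : Fin m => H := WithLp.toLp 2 fun _ => w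

lemma norm_diagVec (w : H) :
    ‖diagVec m w‖ = √(m : ℝ) * ‖w‖ := by
  rw [PiLp.norm_eq_of_L2 (diagVec m w)]
  simp only [diagVec]
  simp only [Finset.sum_const, Finset.card_fin, nsmul_eq_mul]
  rw [Real.sqrt_mul (Nat.cast_nonneg m), Real.sqrt_sq (norm_nonneg w)]

lemma norm_liftL_comp_projDiag (hm : 0 < m) (A : H →L[ℝ] H) :
    ‖(liftL m A).comp (projL (diagSubmodule H m))‖ = ‖A‖ := by
  set C := (liftL m A).comp (projL (diagSubmodule H m)) with hC
  refine le_antisymm ?_ ?_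
  · refine ContinuousLinearMap.opNorm_le_bound _ (norm_nonneg A) fun x => ?_
    have h1 : ‖C x‖ ≤ ‖A‖ * ‖projL (diagSubmodule H m) x‖ := liftL_norm_le A _
    have h2 : ‖projL (diagSubmodule H m) x‖ ≤ ‖x‖ := by
      have := (diagSubmodule H m).orthogonalProjectionOnto.le_opNorm x
      have hle : ‖(diagSubmodule H m).orthogonalProjectionOnto‖ ≤ 1 :=
        Submodule.orthogonalProjectionOnto_norm_le (K := diagSubmodule H m)
      calc ‖projL (diagSubmodule H m) x‖
          = ‖(diagSubmodule H m).orthogonalProjectionOnto x‖ := rfl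
        _ ≤ ‖(diagSubmodule H m).orthogonalProjectionOnto‖ * ‖x‖ := this
        _ ≤ 1 * ‖x‖ := by
            exact mul_le_mul_of_nonneg_right hle (norm_nonneg x)
        _ = ‖x‖ := one_mul _
    calc ‖C x‖ ≤ ‖A‖ * ‖projL (diagSubmodule H m) x‖ := h1
      _ ≤ ‖A‖ * ‖x‖ := mul_le_mul_of_nonneg_left h2 (norm_nonneg A)
  · refine ContinuousLinearMap.opNorm_le_bound _ (norm_nonneg C) fun v => ?_
    have hdm : diagVec m v ∈ diagSubmodule H m := ⟨v, rfl⟩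
    have hproj : projL (diagSubmodule H m) (diagVec m v) = diagVec m v :=
      Submodule.starProjection_eq_self_iff.mpr hdm
    have hCd : C (diagVec m v) = diagVec m (A v) := by
      rw [hC, ContinuousLinearMap.comp_apply, hproj]; rfl
    have hle := C.le_opNorm (diagVec m v)
    rw [hCd, norm_diagVec, norm_diagVec] at hle
    have hs : (0:ℝ) < √(m : ℝ) := Real.sqrt_pos.mpr (by exact_mod_cast hm)
    have : √(m:ℝ) * ‖A v‖ ≤ √(m:ℝ) * (‖C‖ * ‖v‖) := by
      calc √(m:ℝ) * ‖A v‖ ≤ ‖C‖ * (√(m:ℝ) * ‖v‖) := hle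
        _ = √(m:ℝ) * (‖C‖ * ‖v‖) := by ring
    exact le_of_mul_le_mul_left this hs

end Aux

/-- With `T = P_{M_m} ⋯ P_{M_1}` on `H` and `𝐓 = P_{M_m^m} ⋯ P_{M_1^m}` the
corresponding product on `H^m`, for every `k ≥ 1` one has
`‖(𝐓^k − 𝐓^{k−1}) P_D‖ = ‖T^k − T^{k−1}‖` (operator norms). -/
theorem norm_pow_sub_pow_comp_diag {m : ℕ} (M : Fin m → Submodule ℝ H)
    [∀ i, CompleteSpace (M i)] (k : ℕ) (hk : 1 ≤ k) :
    ‖((cyclicProd fun i : Fin m => projL (prodSubmodule fun _ : Fin m => M i)) ^ k -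
        (cyclicProd fun i : Fin m => projL (prodSubmodule fun _ : Fin m => M i)) ^ (k - 1)).comp
        (projL (diagSubmodule H m))‖ =
      ‖(cyclicProd fun i : Fin m => projL (M i)) ^ k -
        (cyclicProd fun i : Fin m => projL (M i)) ^ (k - 1)‖  := by
  rcases Nat.eq_zero_or_pos m with hm | hm
  · subst hm
    haveI : Subsingleton (PiLp 2 fun _ : Fin 0 => H) :=
      ⟨fun a b => WithLp.ofLp_injective 2 (funext fun i => i.elim0)⟩
    have hL : ((cyclicProd fun i : Fin 0 => projL (prodSubmodule fun _ : Fin 0 => M i)) ^ k -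
        (cyclicProd fun i : Fin 0 => projL (prodSubmodule fun _ : Fin 0 => M i)) ^ (k - 1)).comp
        (projL (diagSubmodule H 0)) = 0 := by
      exact ContinuousLinearMap.ext fun x => Subsingleton.elim _ _
    have hT : (cyclicProd fun i : Fin 0 => projL (M i)) = 1 := by
      unfold cyclicProd
      simp [ContinuousLinearMap.one_def]
    rw [hL, hT, one_pow, one_pow, sub_self, norm_zero, norm_zero]
  · have h1 : ∀ i : Fin m, projL (prodSubmodule fun _ : Fin m => M i) = liftL m (projL (M i)) :=
      fun i => projL_prod (M i)
    have h2 : (cyclicProd fun i : Fin m => projL (prodSubmodule fun _ : Fin m => M i)) =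
        liftL m (cyclicProd fun i : Fin m => projL (M i)) := by
      rw [show (fun i : Fin m => projL (prodSubmodule fun _ : Fin m => M i)) =
          fun i : Fin m => liftL m (projL (M i)) from funext h1]
      exact cyclicProd_liftL _
    rw [h2, ← liftL_pow, ← liftL_pow, ← liftL_sub]
    exact norm_liftL_comp_projDiag hm _
end
end

section
/- Let M_1,...,M_m be closed linear subspaces of a real Hilbert space H with intersection M, and T := P_{M_m} ⋯ P_{M_1}. If ‖T^k − T^{k−1}‖ = O(k^{−1−ε}) for some ε > 0, then ‖T^N − P_M‖ < 1 for some positive integer N. -/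
noncomputable section
open Filter

variable {H : Type} [NormedAddCommGroup H] [InnerProductSpace ℝ H] [CompleteSpace H]

instance iInfCompleteSpace {E : Type} [NormedAddCommGroup E] [InnerProductSpace ℝ E]
    [CompleteSpace E] {m : ℕ} (M : Fin m → Submodule ℝ E) [∀ i, CompleteSpace (M i)] :
    CompleteSpace (⨅ i, M i : Submodule ℝ E) := by
  have hM : ∀ i, IsClosed (M i : Set E) := fun i =>
    (completeSpace_coe_iff_isComplete.mp inferInstance).isClosed
  have h : IsClosed ((⨅ i, M i : Submodule ℝ E) : Set E) := by
    rw [Submodule.coe_iInf]; exact isClosed_iInter hM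
  exact h.completeSpace_coe

open Topology

local notation "⟪" x ", " y "⟫" => @inner ℝ _ _ x y

-- auxiliary lemmas

lemma projL_sq (K : Submodule ℝ H) [K.HasOrthogonalProjection] (x : H) :
    ‖x‖ ^ 2 = ‖projL K x‖ ^ 2 + ‖x - projL K x‖ ^ 2 := by
  have h0 : ⟪x - projL K x, (projL K x : H)⟫ = 0 :=
    Submodule.starProjection_inner_eq_zero x _ (K.orthogonalProjectionOnto x).2
  calc ‖x‖ ^ 2 = ‖projL K x + (x - projL K x)‖ ^ 2 := by
        rw [show projL K x + (x - projL K x) = x from by abel]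
    _ = ‖projL K x‖ ^ 2 + 2 * ⟪projL K x, x - projL K x⟫ + ‖x - projL K x‖ ^ 2 :=
        norm_add_sq_real _ _
    _ = _ := by rw [real_inner_comm, h0]; ring

lemma projL_norm_apply_le (K : Submodule ℝ H) [K.HasOrthogonalProjection] (x : H) :
    ‖projL K x‖ ≤ ‖x‖ := by
  have h := projL_sq K x
  nlinarith [norm_nonneg (x - projL K x), norm_nonneg x, norm_nonneg (projL K x)]

lemma projL_eq_of_norm_eq (K : Submodule ℝ H) [K.HasOrthogonalProjection] (x : H)
    (hx : ‖projL K x‖ = ‖x‖) : projL K x = x := by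
  have h := projL_sq K x
  rw [hx] at h
  have : ‖x - projL K x‖ = 0 := by nlinarith [norm_nonneg (x - projL K x)]
  have := norm_eq_zero.mp this
  linear_combination (norm := abel) -this

lemma projL_eq_self_iff (K : Submodule ℝ H) [K.HasOrthogonalProjection] (x : H) :
    projL K x = x ↔ x ∈ K := Submodule.starProjection_eq_self_iff

section ListProd

variable {E : Type} [NormedAddCommGroup E] [NormedSpace ℝ E]

lemma foldl_comp_eq (L : List (E →L[ℝ] E)) (b : E →L[ℝ] E) :
    L.foldl (fun acc p => p.comp acc) b =
      (L.foldl (fun acc p => p.comp acc) (ContinuousLinearMap.id ℝ E)).comp b := by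
  induction L generalizing b with
  | nil => simp
  | cons Q L ih =>
    simp only [List.foldl_cons]
    rw [ih (Q.comp b), ih (Q.comp (ContinuousLinearMap.id ℝ E))]
    simp [ContinuousLinearMap.comp_assoc]

lemma listProd_norm_apply_le (L : List (E →L[ℝ] E))
    (hL : ∀ Q ∈ L, ∀ x, ‖Q x‖ ≤ ‖x‖) (x : E) :
    ‖(L.foldl (fun acc p => p.comp acc) (ContinuousLinearMap.id ℝ E)) x‖ ≤ ‖x‖ := by
  induction L generalizing x with
  | nil => simp
  | cons Q L ih =>
    rw [List.foldl_cons, foldl_comp_eq]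
    calc ‖(L.foldl (fun acc p => p.comp acc) (ContinuousLinearMap.id ℝ E)).comp
          (Q.comp (ContinuousLinearMap.id ℝ E)) x‖
        = ‖(L.foldl (fun acc p => p.comp acc) (ContinuousLinearMap.id ℝ E)) (Q x)‖ := rfl
      _ ≤ ‖Q x‖ := ih (fun R hR => hL R (List.mem_cons_of_mem _ hR)) (Q x)
      _ ≤ ‖x‖ := hL Q (List.mem_cons_self) x

lemma listProd_fixed_of_each (L : List (E →L[ℝ] E)) (x : E)
    (hx : ∀ Q ∈ L, Q x = x) :
    (L.foldl (fun acc p => p.comp acc) (ContinuousLinearMap.id ℝ E)) x = x := by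
  induction L with
  | nil => simp
  | cons Q L ih =>
    rw [List.foldl_cons, foldl_comp_eq]
    have h1 : Q x = x := hx Q (List.mem_cons_self)
    have : (L.foldl (fun acc p => p.comp acc) (ContinuousLinearMap.id ℝ E)).comp
        (Q.comp (ContinuousLinearMap.id ℝ E)) x =
        (L.foldl (fun acc p => p.comp acc) (ContinuousLinearMap.id ℝ E)) (Q x) := rfl
    rw [this, h1]
    exact ih (fun R hR => hx R (List.mem_cons_of_mem _ hR))

lemma listProd_each_of_fixed (L : List (E →L[ℝ] E))
    (hL : ∀ Q ∈ L, (∀ x, ‖Q x‖ ≤ ‖x‖) ∧ (∀ x, ‖Q x‖ = ‖x‖ → Q x = x)) (x : E)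
    (hx : (L.foldl (fun acc p => p.comp acc) (ContinuousLinearMap.id ℝ E)) x = x) :
    ∀ Q ∈ L, Q x = x := by
  induction L generalizing x with
  | nil => intro Q hQ; simp at hQ
  | cons Q L ih =>
    rw [List.foldl_cons, foldl_comp_eq] at hx
    have hx' : (L.foldl (fun acc p => p.comp acc) (ContinuousLinearMap.id ℝ E)) (Q x) = x := hx
    have hQle := hL Q (List.mem_cons_self)
    have hLrest : ∀ R ∈ L, (∀ x, ‖R x‖ ≤ ‖x‖) ∧ (∀ x, ‖R x‖ = ‖x‖ → R x = x) :=
      fun R hR => hL R (List.mem_cons_of_mem _ hR)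
    have hnorm : ‖Q x‖ = ‖x‖ := by
      have h1 : ‖x‖ ≤ ‖Q x‖ := by
        calc ‖x‖ = ‖(L.foldl (fun acc p => p.comp acc) (ContinuousLinearMap.id ℝ E)) (Q x)‖ := by
              rw [hx']
          _ ≤ ‖Q x‖ := listProd_norm_apply_le L (fun R hR => (hLrest R hR).1) (Q x)
      exact le_antisymm (hQle.1 x) h1
    have hQfix : Q x = x := hQle.2 x hnorm
    rw [hQfix] at hx'
    intro R hR
    rcases List.mem_cons.mp hR with rfl | hR'
    · exact hQfix
    · exact ih hLrest x hx' R hR'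

end ListProd

lemma inner_eq_zero_of_norm_le {y w : H} (hq : ∀ t : ℝ, ‖w‖ ≤ ‖w + t • y‖) :
    ⟪w, y⟫ = 0 := by
  have hquad : ∀ t : ℝ, 0 ≤ 2 * t * ⟪w, y⟫ + t ^ 2 * ‖y‖ ^ 2 := by
    intro t
    have h1 : ‖w‖ ^ 2 ≤ ‖w + t • y‖ ^ 2 := by
      have := hq t
      nlinarith [norm_nonneg w, norm_nonneg (w + t • y)]
    have h2 : ‖w + t • y‖ ^ 2 = ‖w‖ ^ 2 + 2 * (t * ⟪w, y⟫) + ‖t • y‖ ^ 2 := by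
      rw [norm_add_sq_real, real_inner_smul_right]
    have h3 : ‖t • y‖ ^ 2 = t ^ 2 * ‖y‖ ^ 2 := by
      rw [norm_smul, Real.norm_eq_abs, mul_pow, sq_abs]
    nlinarith
  rcases eq_or_ne y 0 with rfl | hy
  · simp
  · have ha : 0 < ‖y‖ ^ 2 := by
      have := norm_pos_iff.mpr hy
      positivity
    by_contra hb
    have hb2 : 0 < ⟪w, y⟫ ^ 2 := by
      nlinarith [sq_abs ⟪w, y⟫, abs_pos.mpr hb]
    have hq2 := hquad (-⟪w, y⟫ / ‖y‖ ^ 2)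
    have key : 2 * (-⟪w, y⟫ / ‖y‖ ^ 2) * ⟪w, y⟫ + (-⟪w, y⟫ / ‖y‖ ^ 2) ^ 2 * ‖y‖ ^ 2 =
        -(⟪w, y⟫ ^ 2 / ‖y‖ ^ 2) := by
      field_simp
      ring
    rw [key] at hq2
    have := div_pos hb2 ha
    linarith


set_option maxHeartbeats 1000000 in
set_option synthInstance.maxHeartbeats 200000 in
/-- If `‖T^k − T^{k−1}‖ = O(k^{−1−ε})` for some `ε > 0`, where
`T = P_{M_m} ⋯ P_{M_1}` and `M = ⋂ᵢ Mᵢ`, then `‖T^N − P_M‖ < 1` for some `N ≥ 1`. -/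
theorem exists_pow_sub_proj_norm_lt_one {m : ℕ} (M : Fin m → Submodule ℝ H)
    [∀ i, CompleteSpace (M i)] (ε C : ℝ) (hε : 0 < ε)
    (h : ∀ k : ℕ, 1 ≤ k →
      ‖(cyclicProd fun i : Fin m => projL (M i)) ^ k -
          (cyclicProd fun i : Fin m => projL (M i)) ^ (k - 1)‖ ≤
        C * (k : ℝ) ^ (-1 - ε : ℝ)) :
    ∃ N : ℕ, 0 < N ∧
      ‖(cyclicProd fun i : Fin m => projL (M i)) ^ N - projL (⨅ i, M i)‖ < 1 := by
  set T : H →L[ℝ] H := cyclicProd fun i : Fin m => projL (M i) with hTdef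
  set L : List (H →L[ℝ] H) := List.ofFn fun i : Fin m => projL (M i) with hLdef
  have hTL : T = L.foldl (fun acc p => p.comp acc) (ContinuousLinearMap.id ℝ H) := rfl
  have hLmem : ∀ Q ∈ L, (∀ x, ‖Q x‖ ≤ ‖x‖) ∧ (∀ x, ‖Q x‖ = ‖x‖ → Q x = x) := by
    intro Q hQ
    rw [hLdef, List.mem_ofFn] at hQ
    obtain ⟨i, rfl⟩ := hQ
    exact ⟨projL_norm_apply_le (M i), projL_eq_of_norm_eq (M i)⟩
  have hTnorm : ∀ x, ‖T x‖ ≤ ‖x‖ := by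
    rw [hTL]; exact listProd_norm_apply_le L fun Q hQ => (hLmem Q hQ).1
  have hTpow : ∀ n : ℕ, ∀ x, ‖(T ^ n) x‖ ≤ ‖x‖ := by
    intro n
    induction n with
    | zero => simp
    | succ n ih =>
      intro x
      rw [pow_succ]
      exact le_trans (ih (T x)) (hTnorm x)
  -- summability and Cauchy
  have hsum0 : Summable (fun n : ℕ => C * (n : ℝ) ^ (-1 - ε : ℝ)) :=
    (Real.summable_nat_rpow.mpr (by linarith)).mul_left C
  have hsum1 : Summable (fun n : ℕ => C * ((n + 1 : ℕ) : ℝ) ^ (-1 - ε : ℝ)) :=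
    (summable_nat_add_iff 1).mpr hsum0
  have hdist : Summable (fun n : ℕ => dist (T ^ n) (T ^ (n + 1))) := by
    refine hsum1.of_nonneg_of_le (fun n => dist_nonneg) (fun n => ?_)
    rw [dist_eq_norm, norm_sub_rev]
    have := h (n + 1) (by omega)
    simpa using this
  obtain ⟨S, hS⟩ := cauchySeq_tendsto_of_complete (cauchySeq_of_summable_dist hdist)
  -- algebraic identities for S
  have hTS : T * S = S := by
    have h1 : Tendsto (fun n : ℕ => T * T ^ n) atTop (𝓝 (T * S)) :=
      tendsto_const_nhds.mul hS
    have h2 : Tendsto (fun n : ℕ => T * T ^ n) atTop (𝓝 S) := by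
      have h3 : Tendsto (fun n : ℕ => T ^ (n + 1)) atTop (𝓝 S) :=
        hS.comp (tendsto_add_atTop_nat 1)
      simpa [pow_succ'] using h3
    exact tendsto_nhds_unique h1 h2
  have hSS : S * S = S := by
    have h1 : Tendsto (fun n : ℕ => T ^ n * T ^ n) atTop (𝓝 (S * S)) := hS.mul hS
    have h2 : Tendsto (fun n : ℕ => T ^ n * T ^ n) atTop (𝓝 S) := by
      have hnn : Tendsto (fun n : ℕ => n + n) atTop atTop :=
        tendsto_atTop_mono (fun n => Nat.le_add_left n n) tendsto_id
      have h3 : Tendsto (fun n : ℕ => T ^ (n + n)) atTop (𝓝 S) := hS.comp hnn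
      simpa [pow_add] using h3
    exact tendsto_nhds_unique h1 h2
  have hSapply : ∀ x, Tendsto (fun n : ℕ => (T ^ n) x) atTop (𝓝 (S x)) := fun x =>
    ((ContinuousLinearMap.apply ℝ H x).continuous.tendsto S).comp hS
  have hSnorm : ∀ x, ‖S x‖ ≤ ‖x‖ := by
    intro x
    have := ((continuous_norm.tendsto (S x)).comp (hSapply x))
    exact le_of_tendsto this (Filter.Eventually.of_forall fun n => hTpow n x)
  -- membership facts
  have hmemL : ∀ i : Fin m, projL (M i) ∈ L := by
    intro i; rw [hLdef, List.mem_ofFn]; exact ⟨i, rfl⟩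
  have hfixT : ∀ w ∈ (⨅ i, M i : Submodule ℝ H), T w = w := by
    intro w hw
    rw [hTL]
    refine listProd_fixed_of_each L w ?_
    intro Q hQ
    rw [hLdef, List.mem_ofFn] at hQ
    obtain ⟨i, rfl⟩ := hQ
    exact (projL_eq_self_iff (M i) w).mpr (Submodule.mem_iInf _ |>.mp hw i)
  have hSfix : ∀ w ∈ (⨅ i, M i : Submodule ℝ H), S w = w := by
    intro w hw
    have hTn : ∀ n : ℕ, (T ^ n) w = w := by
      intro n
      induction n with
      | zero => simp
      | succ n ih => rw [pow_succ]; simp only [ContinuousLinearMap.mul_apply]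
                     rw [hfixT w hw, ih]
    have h1 : Tendsto (fun n : ℕ => (T ^ n) w) atTop (𝓝 w) := by
      simp only [hTn]; exact tendsto_const_nhds
    exact tendsto_nhds_unique (hSapply w) h1
  have hSmem : ∀ x, S x ∈ (⨅ i, M i : Submodule ℝ H) := by
    intro x
    have hfix : T (S x) = S x := by
      have : (T * S) x = S x := by rw [hTS]
      simpa using this
    rw [hTL] at hfix
    have := listProd_each_of_fixed L hLmem (S x) hfix
    rw [Submodule.mem_iInf]
    intro i
    exact (projL_eq_self_iff (M i) (S x)).mp (this _ (hmemL i))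
  -- S = projL (⨅ i, M i)
  have hSP : S = projL (⨅ i, M i) := by
    ext x
    have hker : S (x - S x) = 0 := by
      have : (S * S) x = S x := by rw [hSS]
      simp only [ContinuousLinearMap.mul_apply] at this
      rw [map_sub, this, sub_self]
    have horth : ∀ w ∈ (⨅ i, M i : Submodule ℝ H), ⟪x - S x, w⟫ = 0 := by
      intro w hw
      rw [real_inner_comm]
      refine inner_eq_zero_of_norm_le (fun t => ?_)
      have hSwt : S (w + t • (x - S x)) = w := by
        rw [map_add, map_smul, hker, smul_zero, add_zero, hSfix w hw]
      calc ‖w‖ = ‖S (w + t • (x - S x))‖ := by rw [hSwt]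
        _ ≤ ‖w + t • (x - S x)‖ := hSnorm _
    have := Submodule.eq_starProjection_of_mem_of_inner_eq_zero (K := ⨅ i, M i)
      (hSmem x) horth
    exact this.symm
  -- conclusion
  have hfinal : Tendsto (fun n : ℕ => ‖T ^ n - projL (⨅ i, M i)‖) atTop (𝓝 0) := by
    rw [← hSP]
    have h1 : Tendsto (fun n : ℕ => T ^ n - S) atTop (𝓝 (S - S)) :=
      hS.sub tendsto_const_nhds
    rw [sub_self] at h1
    simpa using h1.norm
  have hev : ∀ᶠ n : ℕ in atTop, ‖T ^ n - projL (⨅ i, M i)‖ < 1 :=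
    hfinal.eventually_lt_const (by norm_num)
  obtain ⟨N, hN1, hN2⟩ := ((eventually_ge_atTop 1).and hev).exists
  exact ⟨N, hN1, hN2⟩
end
end

section
/- Let M_1,...,M_m be closed linear subspaces of a real Hilbert space H with intersection M, let T := P_{M_m} ⋯ P_{M_1}, and suppose sup_k k·‖T^k − T^{k−1}‖ < ∞ (which always holds). Then for every starting point y_0 ∈ M + ∑_{i=1}^m M_i^⊥ of the form y_0 = x_0 + (1/m)∑_{i=1}^m x_i with x_0 ∈ M and x_i ∈ M_i^⊥, the iterates y_k := T^k(y_0) satisfy ‖y_k − P_M(y_0)‖ = O(k^{−1/2}). -/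
set_option linter.unusedSectionVars false

noncomputable section
open Filter

variable {H : Type} [NormedAddCommGroup H] [InnerProductSpace ℝ H] [CompleteSpace H]

namespace RateAux

open RealInnerProductSpace

/-- Fold of a list of operators; the head acts first. -/
def F (L : List (H →L[ℝ] H)) : H →L[ℝ] H :=
  L.foldl (fun acc p => p.comp acc) (ContinuousLinearMap.id ℝ H)

lemma foldl_eq (L : List (H →L[ℝ] H)) (A : H →L[ℝ] H) :
    L.foldl (fun acc p => p.comp acc) A = (F L).comp A := by
  induction L generalizing A with
  | nil => simp [F]
  | cons p L ih =>
    rw [List.foldl_cons]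
    show L.foldl _ (p.comp A) = (F (p :: L)).comp A
    rw [ih (p.comp A)]
    have : F (p :: L) = (F L).comp p := by
      show L.foldl _ (p.comp (ContinuousLinearMap.id ℝ H)) = _
      rw [ih, ContinuousLinearMap.comp_id]
    rw [this]
    ext v; simp

lemma F_cons (p : H →L[ℝ] H) (L : List (H →L[ℝ] H)) : F (p :: L) = (F L).comp p := by
  show L.foldl _ (p.comp (ContinuousLinearMap.id ℝ H)) = _
  rw [foldl_eq, ContinuousLinearMap.comp_id]

lemma F_nil : F ([] : List (H →L[ℝ] H)) = ContinuousLinearMap.id ℝ H := rfl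

lemma F_append (L₁ L₂ : List (H →L[ℝ] H)) : F (L₁ ++ L₂) = (F L₂).comp (F L₁) := by
  unfold F
  rw [List.foldl_append, foldl_eq]
  rfl

lemma cyclicProd_eq_F {m : ℕ} (P : Fin m → (H →L[ℝ] H)) :
    cyclicProd P = F (List.ofFn P) := rfl

/-- orthogonal-projection-like operator -/
def IsOP (p : H →L[ℝ] H) : Prop := ∀ u : H, (inner ℝ (p u) (u - p u) : ℝ) = 0

lemma isOP_projL (K : Submodule ℝ H) [K.HasOrthogonalProjection] : IsOP (projL K) := by
  intro u
  have h1 : (projL K) u ∈ K := (K.orthogonalProjectionOnto u).2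
  have h2 : u - projL K u ∈ Kᗮ := K.sub_starProjection_mem_orthogonal u
  exact (Submodule.mem_orthogonal K _).mp h2 _ h1

lemma pyth {p : H →L[ℝ] H} (hp : IsOP p) (u : H) :
    ‖u‖ ^ 2 = ‖p u‖ ^ 2 + ‖u - p u‖ ^ 2 := by
  have h : u = p u + (u - p u) := by abel
  calc ‖u‖ ^ 2 = ‖p u + (u - p u)‖ ^ 2 := by rw [← h]
    _ = ‖p u‖ ^ 2 + 2 * (inner ℝ (p u) (u - p u) : ℝ) + ‖u - p u‖ ^ 2 := norm_add_sq_real _ _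
    _ = ‖p u‖ ^ 2 + ‖u - p u‖ ^ 2 := by rw [hp u]; ring

lemma norm_p_le {p : H →L[ℝ] H} (hp : IsOP p) (u : H) : ‖p u‖ ≤ ‖u‖ := by
  nlinarith [pyth hp u, sq_nonneg ‖u - p u‖, norm_nonneg u, norm_nonneg (p u)]

lemma norm_F_le (L : List (H →L[ℝ] H)) (hL : ∀ p ∈ L, IsOP p) (u : H) :
    ‖F L u‖ ≤ ‖u‖ := by
  induction L generalizing u with
  | nil => simp [F_nil]
  | cons p L ih =>
    rw [F_cons]
    simp only [ContinuousLinearMap.comp_apply]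
    exact (ih (fun q hq => hL q (List.mem_cons_of_mem _ hq)) (p u)).trans
      (norm_p_le (hL p (List.mem_cons_self)) u)

lemma chain_sq (L : List (H →L[ℝ] H)) (hL : ∀ p ∈ L, IsOP p) (w : H) :
    ‖F L w - w‖ ^ 2 ≤ L.length * (‖w‖ ^ 2 - ‖F L w‖ ^ 2) := by
  induction L generalizing w with
  | nil => simp [F_nil]
  | cons p L ih =>
    rw [F_cons]
    simp only [ContinuousLinearMap.comp_apply, List.length_cons]
    have hpOP := hL p (List.mem_cons_self)
    have hLop : ∀ q ∈ L, IsOP q := fun q hq => hL q (List.mem_cons_of_mem _ hq)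
    have hpy : ‖w‖ ^ 2 = ‖p w‖ ^ 2 + ‖w - p w‖ ^ 2 := pyth hpOP w
    have hIH := ih hLop (p w)
    have hle : ‖F L (p w)‖ ≤ ‖p w‖ := norm_F_le L hLop (p w)
    have htri : ‖F L (p w) - w‖ ≤ ‖F L (p w) - p w‖ + ‖p w - w‖ :=
      norm_sub_le_norm_sub_add_norm_sub _ _ _
    set a := ‖F L (p w) - p w‖ with ha
    set b := ‖p w - w‖ with hb
    have hbrev : ‖w - p w‖ = b := norm_sub_rev _ _
    rw [hbrev] at hpy
    set n : ℝ := (L.length : ℝ) with hn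
    have hn0 : (0:ℝ) ≤ n := Nat.cast_nonneg _
    set d : ℝ := ‖p w‖ ^ 2 - ‖F L (p w)‖ ^ 2 with hd
    have hd0 : 0 ≤ d := by nlinarith [norm_nonneg (p w), norm_nonneg (F L (p w))]
    have ha0 : 0 ≤ a := norm_nonneg _
    have hb0 : 0 ≤ b := norm_nonneg _
    have key : (a + b) ^ 2 ≤ (n + 1) * (d + b ^ 2) := by
      rcases Nat.eq_zero_or_pos L.length with h0 | h1
      · have hnz : n = 0 := by rw [hn, h0]; norm_num
        have haz : a = 0 := by nlinarith [sq_nonneg a]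
        rw [hnz, haz]
        nlinarith
      · have hn1 : (1:ℝ) ≤ n := by
          rw [hn]; exact_mod_cast h1
        nlinarith [sq_nonneg (a - n * b), mul_nonneg hd0 hb0, hIH]
    have hgoal : ‖F L (p w) - w‖ ^ 2 ≤ (a + b) ^ 2 :=
      pow_le_pow_left₀ (norm_nonneg _) htri 2
    push_cast
    nlinarith [hgoal, key, hpy]


lemma F_fixed (L : List (H →L[ℝ] H)) (v : H) (h : ∀ p ∈ L, p v = v) : F L v = v := by
  induction L with
  | nil => simp [F_nil]
  | cons p L ih =>
    rw [F_cons]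
    simp only [ContinuousLinearMap.comp_apply, h p (List.mem_cons_self)]
    exact ih (fun q hq => h q (List.mem_cons_of_mem _ hq))

lemma pow_fixed (T : H →L[ℝ] H) (v : H) (h : T v = v) (k : ℕ) : (T ^ k) v = v := by
  induction k with
  | zero => simp
  | succ n ih => rw [pow_succ, ContinuousLinearMap.mul_apply, h, ih]

lemma pow_nonexp (T : H →L[ℝ] H) (h : ∀ v, ‖T v‖ ≤ ‖v‖) (k : ℕ) (v : H) :
    ‖(T ^ k) v‖ ≤ ‖v‖ := by
  induction k with
  | zero => simp
  | succ n ih => rw [pow_succ', ContinuousLinearMap.mul_apply]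
                 exact (h _).trans ih

lemma adjoint_pow (T : H →L[ℝ] H) (k : ℕ) :
    ContinuousLinearMap.adjoint (T ^ k) = (ContinuousLinearMap.adjoint T) ^ k := by
  induction k with
  | zero => simp only [pow_zero]; exact ContinuousLinearMap.adjoint_id
  | succ n ih =>
    rw [pow_succ, pow_succ']
    have : T ^ n * T = (T ^ n).comp T := rfl
    rw [this, ContinuousLinearMap.adjoint_comp, ih]
    rfl

lemma F_adjoint (L : List (H →L[ℝ] H)) :
    ContinuousLinearMap.adjoint (F L) =
      F (L.reverse.map (fun p => ContinuousLinearMap.adjoint p)) := by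
  induction L with
  | nil => simpa [F_nil] using ContinuousLinearMap.adjoint_id
  | cons p L ih =>
    rw [F_cons, ContinuousLinearMap.adjoint_comp, ih, List.reverse_cons, List.map_append,
      F_append]
    simp [F_cons, F_nil]

lemma reverse_ofFn {α : Type*} {n : ℕ} (f : Fin n → α) :
    (List.ofFn f).reverse = List.ofFn (fun i => f i.rev) := by
  apply List.ext_getElem
  · simp
  · intro i h1 h2
    simp only [List.getElem_reverse, List.getElem_ofFn]
    congr 1
    apply Fin.ext
    simp only [List.length_ofFn] at *
    simp [Fin.rev]
    omega


variable {m : ℕ} (M : Fin m → Submodule ℝ H) [∀ i, CompleteSpace (M i)]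

lemma T_adjoint :
    ContinuousLinearMap.adjoint (cyclicProd fun i : Fin m => projL (M i)) =
      F (List.ofFn fun j : Fin m => projL (M j.rev)) := by
  rw [cyclicProd_eq_F, F_adjoint, reverse_ofFn, List.map_ofFn]
  congr 1
  have : ((fun p => ContinuousLinearMap.adjoint p) ∘ fun i : Fin m => projL (M i.rev)) =
      fun j : Fin m => projL (M j.rev) := by
    funext j
    exact ContinuousLinearMap.isSelfAdjoint_iff'.mp (isSelfAdjoint_starProjection _)
  rw [this]

lemma memQ_isOP : ∀ p ∈ List.ofFn (fun j : Fin m => projL (M j.rev)), IsOP p := by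
  intro p hp
  rw [List.mem_ofFn] at hp
  obtain ⟨j, rfl⟩ := hp
  exact isOP_projL _

lemma inner_bound (x : Fin m → H) (hx : ∀ i, x i ∈ (M i)ᗮ) (u : H) (i : Fin m) :
    |(inner ℝ (F (List.ofFn fun j : Fin m => projL (M j.rev)) u) (x i) : ℝ)| ≤
      Real.sqrt (m * (‖u‖ ^ 2 -
        ‖F (List.ofFn fun j : Fin m => projL (M j.rev)) u‖ ^ 2)) * ‖x i‖ := by
  set LQ := List.ofFn (fun j : Fin m => projL (M j.rev)) with hLQ
  have hOP : ∀ p ∈ LQ, IsOP p := memQ_isOP M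
  have hlen : LQ.length = m := List.length_ofFn
  set j : Fin m := i.rev with hjdef
  have hj : (j : ℕ) < LQ.length := by rw [hlen]; exact j.2
  have hget : LQ[(j : ℕ)] = projL (M i) := by
    simp only [hLQ, List.getElem_ofFn]
    congr 2
    apply Fin.ext
    simp [hjdef, Fin.rev]
    omega
  have hsplit : LQ = LQ.take j ++ projL (M i) :: LQ.drop ((j : ℕ) + 1) := by
    rw [← hget, ← List.drop_eq_getElem_cons hj, List.take_append_drop]
  set L₁ := LQ.take (j : ℕ) with hL1
  set L₂ := LQ.drop ((j : ℕ) + 1) with hL2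
  have hOP1 : ∀ p ∈ L₁, IsOP p := fun p hp => hOP p (List.take_subset _ _ hp)
  have hOP2 : ∀ p ∈ L₂, IsOP p := fun p hp => hOP p (List.drop_subset _ _ hp)
  set w := projL (M i) (F L₁ u) with hw
  have hF : F LQ u = F L₂ w := by
    conv_lhs => rw [hsplit]
    rw [F_append, F_cons]
    simp [hw]
  have hwmem : w ∈ M i := ((M i).orthogonalProjectionOnto (F L₁ u)).2
  have hwx : (inner ℝ w (x i) : ℝ) = 0 := (Submodule.mem_orthogonal _ _).mp (hx i) w hwmem
  have h2 : (inner ℝ (F LQ u) (x i) : ℝ) = inner ℝ (F L₂ w - w) (x i) := by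
    rw [hF, inner_sub_left, hwx, sub_zero]
  have h3 : |(inner ℝ (F LQ u) (x i) : ℝ)| ≤ ‖F L₂ w - w‖ * ‖x i‖ := by
    rw [h2]; exact abs_real_inner_le_norm _ _
  -- chain bound
  have hchain := chain_sq L₂ hOP2 w
  have hlen2 : (L₂.length : ℝ) ≤ (m : ℝ) := by
    have h := List.length_drop (i := (j : ℕ) + 1) (l := LQ)
    have : L₂.length ≤ LQ.length := by rw [hL2, h]; omega
    rw [hlen] at this
    exact_mod_cast this
  have hwu : ‖w‖ ≤ ‖u‖ :=
    (norm_p_le (isOP_projL (M i)) (F L₁ u)).trans (norm_F_le L₁ hOP1 u)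
  have hFw : ‖F L₂ w‖ ≤ ‖w‖ := norm_F_le L₂ hOP2 w
  have hsq : ‖F L₂ w - w‖ ^ 2 ≤ (m : ℝ) * (‖u‖ ^ 2 - ‖F LQ u‖ ^ 2) := by
    rw [hF]
    have h1 : (L₂.length : ℝ) * (‖w‖ ^ 2 - ‖F L₂ w‖ ^ 2) ≤
        (m : ℝ) * (‖u‖ ^ 2 - ‖F L₂ w‖ ^ 2) := by
      have e1 : (0:ℝ) ≤ ‖w‖ ^ 2 - ‖F L₂ w‖ ^ 2 := by
        nlinarith [norm_nonneg w, norm_nonneg (F L₂ w)]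
      have e2 : ‖w‖ ^ 2 ≤ ‖u‖ ^ 2 := by nlinarith [norm_nonneg w]
      nlinarith [Nat.cast_nonneg (α := ℝ) L₂.length]
    exact hchain.trans h1
  have hnorm : ‖F L₂ w - w‖ ≤ Real.sqrt ((m : ℝ) * (‖u‖ ^ 2 - ‖F LQ u‖ ^ 2)) := by
    have := Real.sqrt_le_sqrt hsq
    rwa [Real.sqrt_sq (norm_nonneg _)] at this
  exact h3.trans (mul_le_mul_of_nonneg_right hnorm (norm_nonneg _))

end RateAux

open RateAux

/-- Assuming `sup_k k·‖T^k − T^{k−1}‖ < ∞` (which always holds), for every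
starting point `y₀ = x₀ + (1/m)∑ᵢ xᵢ` with `x₀ ∈ M = ⋂ᵢ Mᵢ` and `xᵢ ∈ Mᵢ^⊥`, the iterates
`y_k = T^k(y₀)` satisfy `‖y_k − P_M(y₀)‖ = O(k^{−1/2})`. -/
theorem rate_on_sum_of_perps {m : ℕ} (M : Fin m → Submodule ℝ H)
    [∀ i, CompleteSpace (M i)]
    (hB : ∃ B : ℝ, ∀ k : ℕ, 1 ≤ k →
      (k : ℝ) * ‖(cyclicProd fun i : Fin m => projL (M i)) ^ k -
          (cyclicProd fun i : Fin m => projL (M i)) ^ (k - 1)‖ ≤ B)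
    (x₀ : H) (hx₀ : x₀ ∈ ⨅ i, M i) (x : Fin m → H) (hx : ∀ i, x i ∈ (M i)ᗮ)
    (y₀ : H) (hy₀ : y₀ = x₀ + (m : ℝ)⁻¹ • ∑ i : Fin m, x i) :
    ∃ C : ℝ, ∀ k : ℕ, 1 ≤ k →
      ‖((cyclicProd fun i : Fin m => projL (M i)) ^ k) y₀ - projL (⨅ i, M i) y₀‖ ≤
        C * (k : ℝ) ^ (-(1 : ℝ) / 2) := by
  classical
  obtain ⟨B, hBk⟩ := hB
  set T : H →L[ℝ] H := cyclicProd fun i : Fin m => projL (M i) with hT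
  set K : Submodule ℝ H := ⨅ i, M i with hK
  set z : H := (m : ℝ)⁻¹ • ∑ i : Fin m, x i with hz
  have hTfix : T x₀ = x₀ := by
    rw [hT, cyclicProd_eq_F]
    apply F_fixed
    intro p hp
    rw [List.mem_ofFn] at hp
    obtain ⟨i, rfl⟩ := hp
    have hmem : x₀ ∈ M i := (Submodule.mem_iInf _).mp hx₀ i
    exact Submodule.starProjection_eq_self_iff.mpr hmem
  have hTkfix : ∀ k : ℕ, (T ^ k) x₀ = x₀ := pow_fixed T x₀ hTfix
  have hxiK : ∀ i, x i ∈ Kᗮ := fun i => (Submodule.orthogonal_le (iInf_le M i)) (hx i)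
  have hzK : z ∈ Kᗮ := by
    rw [hz]
    exact Submodule.smul_mem _ _ (Submodule.sum_mem _ fun i _ => hxiK i)
  have hPK : projL K y₀ = x₀ := by
    rw [hy₀]
    have h1 : projL K x₀ = x₀ := Submodule.starProjection_eq_self_iff.mpr hx₀
    have h2 : projL K z = 0 := by
      have h := Submodule.orthogonalProjectionOnto_apply_of_mem_orthogonal hzK
      show ((K.orthogonalProjectionOnto z : K) : H) = 0
      rw [h]; rfl
    rw [map_add, h1, h2, add_zero]
  have hkey : ∀ k : ℕ, (T ^ k) y₀ - projL K y₀ = (T ^ k) z := by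
    intro k
    rw [hPK, hy₀, map_add, hTkfix]
    abel
  rcases Nat.eq_zero_or_pos m with hm0 | hm1
  · refine ⟨0, fun k hk => ?_⟩
    have hminv : ((m : ℝ))⁻¹ = 0 := by rw [hm0]; simp
    have hz0 : z = 0 := by rw [hz, hminv, zero_smul]
    rw [hkey k, hz0, map_zero, norm_zero, zero_mul]
  · have hB0 : 0 ≤ B := le_trans (by positivity) (hBk 1 le_rfl)
    set S : H →L[ℝ] H := F (List.ofFn fun j : Fin m => projL (M j.rev)) with hS
    have hSadj : ContinuousLinearMap.adjoint T = S := T_adjoint M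
    have hOPQ := memQ_isOP M
    have hSnon : ∀ v : H, ‖S v‖ ≤ ‖v‖ := fun v => norm_F_le _ hOPQ v
    have hm1R : (1:ℝ) ≤ (m:ℝ) := by exact_mod_cast hm1
    have hmpos : (0:ℝ) < (m:ℝ) := by linarith
    set Cx : ℝ := ∑ i : Fin m, ‖x i‖ with hCx
    have hCx0 : 0 ≤ Cx := Finset.sum_nonneg fun i _ => norm_nonneg _
    refine ⟨(m:ℝ)⁻¹ * Cx * Real.sqrt (2 * m * B), fun k hk => ?_⟩
    obtain ⟨n, rfl⟩ : ∃ n, k = n + 1 := ⟨k - 1, (Nat.succ_pred_eq_of_pos hk).symm⟩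
    rw [hkey]
    set r : ℝ := ‖(T ^ (n+1)) z‖ with hr
    have hr0 : 0 ≤ r := norm_nonneg _
    set u : H := (S ^ n) ((T ^ (n+1)) z) with hu
    have hu_r : ‖u‖ ≤ r := pow_nonexp S hSnon n _
    have hSu_r : ‖S u‖ ≤ r := (hSnon u).trans hu_r
    have hnk : (0:ℝ) < (n:ℝ) + 1 := by positivity
    have hTTnorm : ‖T ^ (n+1) - T ^ n‖ ≤ B / ((n:ℝ)+1) := by
      have h := hBk (n+1) (by omega)
      simp only [Nat.add_sub_cancel] at h
      push_cast at h
      rw [le_div_iff₀ hnk, mul_comm]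
      exact h
    have hSdiff : ‖S ^ n - S ^ (n+1)‖ ≤ B / ((n:ℝ)+1) := by
      have e1 : S ^ n - S ^ (n+1) = ContinuousLinearMap.adjoint (T ^ n - T ^ (n+1)) := by
        rw [map_sub, adjoint_pow, adjoint_pow, hSadj]
      rw [e1]
      have e2 : ‖ContinuousLinearMap.adjoint (T ^ n - T ^ (n+1))‖ = ‖T ^ n - T ^ (n+1)‖ :=
        LinearIsometryEquiv.norm_map _ _
      rw [e2, norm_sub_rev]
      exact hTTnorm
    have hstep : ‖u - S u‖ ≤ B / ((n:ℝ)+1) * r := by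
      have hsS : S ^ (n+1) = S * S ^ n := pow_succ' S n
      have e1 : u - S u = (S ^ n - S ^ (n+1)) ((T ^ (n+1)) z) := by
        rw [ContinuousLinearMap.sub_apply, hsS, ContinuousLinearMap.mul_apply, hu]
      rw [e1, hr]
      exact le_trans ((S ^ n - S ^ (n+1)).le_opNorm _)
        (mul_le_mul_of_nonneg_right hSdiff (norm_nonneg _))
    have hD : ‖u‖ ^ 2 - ‖S u‖ ^ 2 ≤ 2 * (B / ((n:ℝ)+1)) * r ^ 2 := by
      have h1 : ‖u‖ - ‖S u‖ ≤ ‖u - S u‖ := norm_sub_norm_le _ _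
      nlinarith [norm_nonneg (S u), norm_nonneg u, hstep, hu_r, hSu_r, hr0,
        mul_nonneg (div_nonneg hB0 hnk.le) hr0, hSnon u]
    have hinner : r ^ 2 = (inner ℝ (S u) z : ℝ) := by
      have hsS : S ^ (n+1) = S * S ^ n := pow_succ' S n
      have ha : ContinuousLinearMap.adjoint (T ^ (n+1)) = S ^ (n+1) := by
        rw [adjoint_pow, hSadj]
      have e0 : S u = (ContinuousLinearMap.adjoint (T ^ (n+1))) ((T ^ (n+1)) z) := by
        rw [ha, hsS, ContinuousLinearMap.mul_apply, hu]
      rw [e0, ContinuousLinearMap.adjoint_inner_left, real_inner_self_eq_norm_sq, hr]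
    have hbound : ∀ i : Fin m, (inner ℝ (S u) (x i) : ℝ) ≤
        Real.sqrt ((m:ℝ) * (‖u‖ ^ 2 - ‖S u‖ ^ 2)) * ‖x i‖ := by
      intro i
      have h := inner_bound M x hx u i
      rw [← hS] at h
      exact (le_abs_self _).trans h
    have hsum2 : r ^ 2 ≤ (m:ℝ)⁻¹ * Real.sqrt ((m:ℝ) * (‖u‖ ^ 2 - ‖S u‖ ^ 2)) * Cx := by
      calc r ^ 2 = (m:ℝ)⁻¹ * ∑ i : Fin m, (inner ℝ (S u) (x i) : ℝ) := by
            rw [hinner, hz, real_inner_smul_right, inner_sum]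
        _ ≤ (m:ℝ)⁻¹ * (Real.sqrt ((m:ℝ) * (‖u‖ ^ 2 - ‖S u‖ ^ 2)) * ∑ i : Fin m, ‖x i‖) := by
            apply mul_le_mul_of_nonneg_left _ (by positivity)
            rw [Finset.mul_sum]
            exact Finset.sum_le_sum fun i _ => hbound i
        _ = (m:ℝ)⁻¹ * Real.sqrt ((m:ℝ) * (‖u‖ ^ 2 - ‖S u‖ ^ 2)) * Cx := by
            rw [hCx]; ring
    have hargle : (m:ℝ) * (‖u‖ ^ 2 - ‖S u‖ ^ 2) ≤ (2 * m * B / ((n:ℝ)+1)) * r ^ 2 := by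
      have h2 : (m:ℝ) * (2 * (B/((n:ℝ)+1)) * r ^ 2) = 2 * m * B / ((n:ℝ)+1) * r ^ 2 := by
        ring
      have h3 := mul_le_mul_of_nonneg_left hD hmpos.le
      linarith
    have hsqrt : Real.sqrt ((m:ℝ) * (‖u‖ ^ 2 - ‖S u‖ ^ 2)) ≤
        Real.sqrt (2 * m * B / ((n:ℝ)+1)) * r := by
      have h1 := Real.sqrt_le_sqrt hargle
      rwa [Real.sqrt_mul (by positivity : (0:ℝ) ≤ 2 * m * B / ((n:ℝ)+1)), Real.sqrt_sq hr0]
        at h1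
    set c : ℝ := (m:ℝ)⁻¹ * Cx * Real.sqrt (2 * m * B / ((n:ℝ)+1)) with hc
    have hc0 : 0 ≤ c := by positivity
    have hrc : r ≤ c := by
      have hrc2 : r ^ 2 ≤ c * r := by
        calc r ^ 2 ≤ (m:ℝ)⁻¹ * Real.sqrt ((m:ℝ) * (‖u‖ ^ 2 - ‖S u‖ ^ 2)) * Cx := hsum2
          _ ≤ (m:ℝ)⁻¹ * (Real.sqrt (2 * m * B / ((n:ℝ)+1)) * r) * Cx := by
              apply mul_le_mul_of_nonneg_right _ hCx0
              exact mul_le_mul_of_nonneg_left hsqrt (by positivity)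
          _ = c * r := by rw [hc]; ring
      rcases eq_or_lt_of_le hr0 with h0 | hpos
      · rw [← h0]; exact hc0
      · have h4 : r * r ≤ c * r := by rw [← pow_two]; exact hrc2
        exact le_of_mul_le_mul_right h4 hpos
    -- convert to rpow form
    have hcast : ((n + 1 : ℕ) : ℝ) = (n:ℝ) + 1 := by push_cast; ring
    have hrpow : ((n + 1 : ℕ) : ℝ) ^ (-(1:ℝ)/2) = (Real.sqrt ((n:ℝ)+1))⁻¹ := by
      rw [hcast, show (-(1:ℝ)/2) = -(1/2 : ℝ) by ring, Real.rpow_neg hnk.le,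
        ← Real.sqrt_eq_rpow]
    have hsplit : Real.sqrt (2 * m * B / ((n:ℝ)+1)) =
        Real.sqrt (2 * m * B) * (Real.sqrt ((n:ℝ)+1))⁻¹ := by
      rw [div_eq_mul_inv, Real.sqrt_mul (by positivity), Real.sqrt_inv]
    calc r ≤ c := hrc
      _ = (m:ℝ)⁻¹ * Cx * Real.sqrt (2 * m * B) * ((n + 1 : ℕ) : ℝ) ^ (-(1:ℝ)/2) := by
          rw [hc, hsplit, hrpow]; ring
      _ ≤ _ := le_refl _
end
end

section
/- Let M_1, M_2 be closed linear subspaces of a real Hilbert space and T := P_{M_2}P_{M_1}. If for some ε > 0, sup_k k^{1+ε}‖T^k − T^{k−1}‖ < ∞, then there exist q ∈ (0,1), C > 0, and N such that ‖T^N − P_{M_1∩M_2}‖ ≤ q < 1, and hence ‖T^k − P_{M_1∩M_2}‖ ≤ C q^{k/N} for all k. -/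
noncomputable section
open Filter
open Topology

variable {H : Type} [NormedAddCommGroup H] [InnerProductSpace ℝ H] [CompleteSpace H]

instance infCompleteSpace {E : Type} [NormedAddCommGroup E] [InnerProductSpace ℝ E]
    [CompleteSpace E] (K L : Submodule ℝ E) [CompleteSpace K] [CompleteSpace L] :
    CompleteSpace (K ⊓ L : Submodule ℝ E) := by
  have hK : IsClosed (K : Set E) := (completeSpace_coe_iff_isComplete.mp inferInstance).isClosed
  have hL : IsClosed (L : Set E) := (completeSpace_coe_iff_isComplete.mp inferInstance).isClosed
  have h : IsClosed ((K ⊓ L : Submodule ℝ E) : Set E) := by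
    rw [Submodule.coe_inf]; exact hK.inter hL
  exact h.completeSpace_coe

lemma projL_apply_mem (K : Submodule ℝ H) [CompleteSpace K] (x : H) : projL K x ∈ K :=
  (K.orthogonalProjectionOnto x).2

lemma projL_eq_self (K : Submodule ℝ H) [CompleteSpace K] {x : H} (hx : x ∈ K) :
    projL K x = x := by
  have h := Submodule.orthogonalProjectionOnto_mem_subspace_eq_self (K := K) ⟨x, hx⟩
  simpa [projL] using congrArg Subtype.val h

lemma projL_pythagoras (K : Submodule ℝ H) [CompleteSpace K] (x : H) :
    ‖projL K x‖ ^ 2 + ‖x - projL K x‖ ^ 2 = ‖x‖ ^ 2 := by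
  have horth : (inner ℝ (projL K x) (x - projL K x) : ℝ) = 0 := by
    rw [real_inner_comm]
    exact Submodule.starProjection_inner_eq_zero x _ (projL_apply_mem K x)
  have hx : x = projL K x + (x - projL K x) := by abel
  calc ‖projL K x‖ ^ 2 + ‖x - projL K x‖ ^ 2
      = ‖projL K x + (x - projL K x)‖ ^ 2 := by
        rw [norm_add_sq_real, horth]; ring
    _ = ‖x‖ ^ 2 := by rw [← hx]

lemma norm_projL_apply_le (K : Submodule ℝ H) [CompleteSpace K] (x : H) :
    ‖projL K x‖ ≤ ‖x‖ := by
  have h := projL_pythagoras K x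
  nlinarith [norm_nonneg (projL K x), norm_nonneg x, sq_nonneg ‖x - projL K x‖]

lemma norm_sub_projL_apply_le (K : Submodule ℝ H) [CompleteSpace K] (x : H) :
    ‖x - projL K x‖ ≤ ‖x‖ := by
  have h := projL_pythagoras K x
  nlinarith [norm_nonneg (x - projL K x), norm_nonneg x, sq_nonneg ‖projL K x‖]

lemma mem_of_norm_projL_eq (K : Submodule ℝ H) [CompleteSpace K] {x : H}
    (h : ‖x‖ ≤ ‖projL K x‖) : x ∈ K := by
  have hp := projL_pythagoras K x
  have h2 : ‖x - projL K x‖ = 0 := by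
    nlinarith [norm_nonneg (x - projL K x), norm_nonneg x, norm_projL_apply_le K x]
  have h3 : x = projL K x := by
    have := norm_eq_zero.mp h2
    have := sub_eq_zero.mp this
    exact this
  rw [h3]; exact projL_apply_mem K x

lemma projL_selfAdjoint (K : Submodule ℝ H) [CompleteSpace K] :
    IsSelfAdjoint (projL K) := isSelfAdjoint_starProjection K

lemma inner_projL_left (K : Submodule ℝ H) [CompleteSpace K] (z : H) {y : H} (hy : y ∈ K) :
    (inner ℝ (projL K z) y : ℝ) = inner ℝ z y := by
  have h := Submodule.inner_starProjection_left_eq_right (K := K) z y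
  calc (inner ℝ (projL K z) y : ℝ) = inner ℝ z ((K.orthogonalProjectionOnto y : H)) := h
    _ = inner ℝ z y := by rw [show ((K.orthogonalProjectionOnto y : H)) = projL K y from rfl,
        projL_eq_self K hy]

lemma projL_norm_le (K : Submodule ℝ H) [CompleteSpace K] : ‖projL K‖ ≤ 1 :=
  ContinuousLinearMap.opNorm_le_bound _ zero_le_one fun x => by
    simpa using norm_projL_apply_le K x

lemma pow_mul_proj {R : Type*} [Monoid R] {a p : R} (hap : a * p = p) (n : ℕ) :
    a ^ n * p = p := by
  induction n with
  | zero => simp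
  | succ m ihm => rw [pow_succ, mul_assoc, hap, ihm]

lemma proj_mul_pow {R : Type*} [Monoid R] {a p : R} (hpa : p * a = p) (n : ℕ) :
    p * a ^ n = p := by
  induction n with
  | zero => simp
  | succ m ihm => rw [pow_succ, ← mul_assoc, ihm, hpa]

lemma sub_pow_of_proj {R : Type*} [Ring R] (a p : R) (hap : a * p = p) (hpa : p * a = p)
    (hpp : p * p = p) : ∀ j, 1 ≤ j → (a - p) ^ j = a ^ j - p := by
  intro j hj
  induction j with
  | zero => omega
  | succ n ih =>
    rcases Nat.eq_or_lt_of_le hj with h1 | h1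
    · simp [← h1]
    · have hn : 1 ≤ n := by omega
      rw [pow_succ (a-p), ih hn, sub_mul, mul_sub, mul_sub, pow_mul_proj hap, hpa, hpp,
        ← pow_succ]
      abel

set_option maxHeartbeats 1000000 in
/-- For `T = P_{M₂}P_{M₁}`: if for some `ε > 0` one has
`sup_k k^{1+ε}‖T^k − T^{k−1}‖ < ∞`, then there exist `q ∈ (0,1)`, `C > 0` and `N ≥ 1` with
`‖T^N − P_{M₁∩M₂}‖ ≤ q < 1` and `‖T^k − P_{M₁∩M₂}‖ ≤ C·q^{k/N}` for all `k`. -/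
theorem two_subspaces_linear_rate (M₁ M₂ : Submodule ℝ H)
    [CompleteSpace M₁] [CompleteSpace M₂] (ε : ℝ) (hε : 0 < ε)
    (hB : ∃ B : ℝ, ∀ k : ℕ, 1 ≤ k →
      (k : ℝ) ^ (1 + ε : ℝ) *
        ‖((projL M₂).comp (projL M₁)) ^ k - ((projL M₂).comp (projL M₁)) ^ (k - 1)‖ ≤ B) :
    ∃ q C : ℝ, ∃ N : ℕ, 0 < q ∧ q < 1 ∧ 0 < C ∧ 0 < N ∧
      ‖((projL M₂).comp (projL M₁)) ^ N - projL (M₁ ⊓ M₂)‖ ≤ q ∧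
      ∀ k : ℕ,
        ‖((projL M₂).comp (projL M₁)) ^ k - projL (M₁ ⊓ M₂)‖ ≤
          C * q ^ ((k : ℝ) / (N : ℝ)) := by
  haveI : CompleteSpace (M₁ ⊓ M₂ : Submodule ℝ H) := infCompleteSpace M₁ M₂
  obtain ⟨B, hBk⟩ := hB
  set T : H →L[ℝ] H := (projL M₂).comp (projL M₁) with hTdef
  set P : H →L[ℝ] H := projL (M₁ ⊓ M₂) with hPdef
  have hTmul : T = projL M₂ * projL M₁ := rfl
  -- the summable majorant
  set d : ℕ → ℝ := fun n => B * ((n : ℝ) + 1) ^ (-(1 + ε) : ℝ) with hddef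
  have hdist : ∀ n : ℕ, dist (T ^ n) (T ^ (n + 1)) ≤ d n := by
    intro n
    have h := hBk (n + 1) (by omega)
    have hc : (0 : ℝ) < ((n : ℝ) + 1) ^ ((1 + ε) : ℝ) := by
      apply Real.rpow_pos_of_pos; positivity
    have h1 : ‖T ^ (n + 1) - T ^ n‖ ≤ B / ((n : ℝ) + 1) ^ ((1 + ε) : ℝ) := by
      rw [le_div_iff₀ hc]
      have : ((n + 1 : ℕ) : ℝ) = (n : ℝ) + 1 := by push_cast; ring
      simpa [this, Nat.add_sub_cancel, mul_comm] using h
    rw [dist_eq_norm, norm_sub_rev]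
    calc ‖T ^ (n + 1) - T ^ n‖ ≤ B / ((n : ℝ) + 1) ^ ((1 + ε) : ℝ) := h1
      _ = d n := by
          simp only [hddef]
          rw [Real.rpow_neg (by positivity)]
          ring
  have hd : Summable d := by
    have h0 : Summable (fun n : ℕ => (n : ℝ) ^ (-(1 + ε) : ℝ)) :=
      Real.summable_nat_rpow.2 (by linarith)
    have h1 : Summable (fun n : ℕ => ((n + 1 : ℕ) : ℝ) ^ (-(1 + ε) : ℝ)) :=
      (summable_nat_add_iff 1).2 h0
    have h2 : Summable (fun n : ℕ => ((n : ℝ) + 1) ^ (-(1 + ε) : ℝ)) := by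
      apply h1.congr; intro n; push_cast; ring_nf
    exact h2.mul_left B
  -- Cauchy, limit S
  have hcauchy : CauchySeq (fun n => T ^ n) :=
    cauchySeq_of_dist_le_of_summable d hdist hd
  obtain ⟨S, hS⟩ := cauchySeq_tendsto_of_complete hcauchy
  -- T * S = S
  have hTS : T * S = S := by
    have h1 : Tendsto (fun n => T * T ^ n) atTop (𝓝 (T * S)) := tendsto_const_nhds.mul hS
    have h2 : Tendsto (fun n => T * T ^ n) atTop (𝓝 S) := by
      have h3 := hS.comp (tendsto_add_atTop_nat 1)
      have h4 : ((fun n => T ^ n) ∘ fun a => a + 1) = fun n => T * T ^ n := by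
        funext n; simp [Function.comp, pow_succ']
      rwa [h4] at h3
    exact tendsto_nhds_unique h1 h2
  -- S = P
  have hSP : S = P := by
    ext x
    have hx : Tendsto (fun n => (T ^ n) x) atTop (𝓝 (S x)) :=
      ((ContinuousLinearMap.apply ℝ H x).continuous.tendsto S).comp hS
    -- S x ∈ M₁ ⊓ M₂
    have hfix : S x = projL M₂ (projL M₁ (S x)) := by
      conv_lhs => rw [← hTS]
      rfl
    have hm1 : S x ∈ M₁ := by
      apply mem_of_norm_projL_eq M₁
      calc ‖S x‖ = ‖projL M₂ (projL M₁ (S x))‖ := by rw [← hfix]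
        _ ≤ ‖projL M₁ (S x)‖ := norm_projL_apply_le M₂ _
    have hm2 : S x ∈ M₂ := by
      rw [projL_eq_self M₁ hm1] at hfix
      rw [hfix]; exact projL_apply_mem M₂ _
    -- orthogonality
    have hinner : ∀ y ∈ M₁ ⊓ M₂, (inner ℝ (x - S x) y : ℝ) = 0 := by
      intro y hy
      obtain ⟨hy1, hy2⟩ := hy
      have hstep : ∀ n : ℕ, (inner ℝ ((T ^ n) x) y : ℝ) = inner ℝ x y := by
        intro n
        induction n with
        | zero => simp
        | succ m ihm =>
          have : (T ^ (m + 1)) x = projL M₂ (projL M₁ ((T ^ m) x)) := by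
            rw [pow_succ']; rfl
          rw [this, inner_projL_left M₂ _ hy2, inner_projL_left M₁ _ hy1, ihm]
      have hlim : Tendsto (fun n => (inner ℝ ((T ^ n) x) y : ℝ)) atTop (𝓝 (inner ℝ (S x) y)) :=
        hx.inner tendsto_const_nhds
      have : (inner ℝ (S x) y : ℝ) = inner ℝ x y :=
        tendsto_nhds_unique hlim (by simpa only [hstep] using
          (tendsto_const_nhds : Tendsto (fun _ : ℕ => (inner ℝ x y : ℝ)) atTop _))
      rw [inner_sub_left, this, sub_self]
    exact ((Submodule.eq_starProjection_of_mem_of_inner_eq_zero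
      (K := M₁ ⊓ M₂) ⟨hm1, hm2⟩ hinner)).symm
  rw [hSP] at hS
  -- tail bound
  have htailbound : ∀ n : ℕ, ‖T ^ n - P‖ ≤ ∑' m, d (n + m) := by
    intro n
    have := dist_le_tsum_of_dist_le_of_tendsto d hdist hd hS n
    rwa [dist_eq_norm] at this
  have htail0 : Tendsto (fun n => ∑' m, d (n + m)) atTop (𝓝 0) := by
    have heq : ∀ n : ℕ, ∑' m, d (n + m) = (∑' m, d m) - ∑ i ∈ Finset.range n, d i := by
      intro n
      have h := hd.sum_add_tsum_nat_add n
      have h2 : ∑' m, d (n + m) = ∑' m, d (m + n) := tsum_congr fun m => by rw [add_comm]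
      linarith [h, h2]
    simp_rw [heq]
    have h5 := hd.hasSum.tendsto_sum_nat
    have h6 : Tendsto (fun n : ℕ => (∑' m, d m) - ∑ i ∈ Finset.range n, d i) atTop
        (𝓝 ((∑' m, d m) - ∑' m, d m)) := tendsto_const_nhds.sub h5
    simpa using h6
  -- choose N
  have hev : ∀ᶠ n : ℕ in atTop, (∑' m, d (n + m)) < 1 / 2 :=
    htail0.eventually (Iio_mem_nhds (by norm_num))
  obtain ⟨N, hN2, hN1⟩ := (hev.and (eventually_ge_atTop 1)).exists
  -- basic operator facts
  have hT1 : ‖T‖ ≤ 1 := by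
    calc ‖T‖ ≤ ‖projL M₂‖ * ‖projL M₁‖ := ContinuousLinearMap.opNorm_comp_le _ _
      _ ≤ 1 * 1 := by
          have := projL_norm_le (H := H) M₁
          have := projL_norm_le (H := H) M₂
          apply mul_le_mul <;> first | assumption | positivity
      _ = 1 := one_mul 1
  have hTn : ∀ n : ℕ, ‖T ^ n‖ ≤ 1 := by
    intro n
    induction n with
    | zero =>
      rw [pow_zero, ContinuousLinearMap.one_def]
      exact ContinuousLinearMap.norm_id_le
    | succ m ihm =>
      calc ‖T ^ (m + 1)‖ = ‖T ^ m * T‖ := by rw [pow_succ]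
        _ ≤ ‖T ^ m‖ * ‖T‖ := norm_mul_le _ _
        _ ≤ 1 * 1 := mul_le_mul ihm hT1 (norm_nonneg _) zero_le_one
        _ = 1 := one_mul 1
  -- projection identities
  have hsub1 : M₁ ⊓ M₂ ≤ M₁ := inf_le_left
  have hsub2 : M₁ ⊓ M₂ ≤ M₂ := inf_le_right
  have hTP : T * P = P := by
    ext x
    have hm : P x ∈ M₁ ⊓ M₂ := projL_apply_mem _ x
    show projL M₂ (projL M₁ (P x)) = P x
    rw [projL_eq_self M₁ (hsub1 hm), projL_eq_self M₂ (hsub2 hm)]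
  have hP1 : projL M₁ * P = P := by
    ext x
    have hm : P x ∈ M₁ ⊓ M₂ := projL_apply_mem _ x
    show projL M₁ (P x) = P x
    exact projL_eq_self M₁ (hsub1 hm)
  have hP2 : projL M₂ * P = P := by
    ext x
    have hm : P x ∈ M₁ ⊓ M₂ := projL_apply_mem _ x
    show projL M₂ (P x) = P x
    exact projL_eq_self M₂ (hsub2 hm)
  have hPsa : IsSelfAdjoint P := projL_selfAdjoint (M₁ ⊓ M₂)
  have hPT : P * T = P := by
    have hstar : star (P * T) = P := by
      rw [star_mul, hTmul, star_mul, (projL_selfAdjoint M₁).star_eq,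
        (projL_selfAdjoint M₂).star_eq, hPsa.star_eq, mul_assoc, hP2, hP1]
    calc P * T = star (star (P * T)) := (star_star _).symm
      _ = star P := by rw [hstar]
      _ = P := hPsa.star_eq
  have hPP : P * P = P := by
    ext x
    have hm : P x ∈ M₁ ⊓ M₂ := projL_apply_mem _ x
    show projL (M₁ ⊓ M₂) (P x) = P x
    exact projL_eq_self _ hm
  have hTnP : ∀ n : ℕ, T ^ n * P = P := pow_mul_proj hTP
  have hPTn : ∀ n : ℕ, P * T ^ n = P := proj_mul_pow hPT
  -- ‖1 - P‖ ≤ 1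
  have hone : ‖(1 : H →L[ℝ] H) - P‖ ≤ 1 := by
    apply ContinuousLinearMap.opNorm_le_bound _ zero_le_one
    intro x
    rw [one_mul]
    have : ((1 : H →L[ℝ] H) - P) x = x - P x := rfl
    rw [this]
    exact norm_sub_projL_apply_le _ x
  -- key geometric bound
  have hNq : ‖T ^ N - P‖ ≤ 1 / 2 := le_trans (htailbound N) (le_of_lt hN2)
  have hgeo : ∀ j : ℕ, ‖T ^ (N * j) - P‖ ≤ (1 / 2 : ℝ) ^ j := by
    intro j
    rcases Nat.eq_zero_or_pos j with hj | hj
    · subst hj; simpa using hone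
    · have heq : T ^ (N * j) - P = (T ^ N - P) ^ j := by
        rw [sub_pow_of_proj _ _ (hTnP N) (hPTn N) hPP j hj, pow_mul]
      rw [heq]
      calc ‖(T ^ N - P) ^ j‖ ≤ ‖T ^ N - P‖ ^ j := norm_pow_le' _ hj
        _ ≤ (1 / 2 : ℝ) ^ j := pow_le_pow_left₀ (norm_nonneg _) hNq j
  refine ⟨1 / 2, 2, N, by norm_num, by norm_num, by norm_num, hN1, hNq, ?_⟩
  intro k
  set j := k / N with hj
  set r := k % N with hr
  have hkeq : k = r + N * j := by
    rw [hj, hr, add_comm]; exact (Nat.div_add_mod k N).symm ▸ by omega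
  have hdecomp : T ^ k - P = T ^ r * (T ^ (N * j) - P) := by
    rw [mul_sub, ← pow_add, ← hkeq, hTnP r]
  have hnorm : ‖T ^ k - P‖ ≤ (1 / 2 : ℝ) ^ j := by
    rw [hdecomp]
    calc ‖T ^ r * (T ^ (N * j) - P)‖ ≤ ‖T ^ r‖ * ‖T ^ (N * j) - P‖ := norm_mul_le _ _
      _ ≤ 1 * ((1 / 2 : ℝ) ^ j) := mul_le_mul (hTn r) (hgeo j) (norm_nonneg _) zero_le_one
      _ = (1 / 2 : ℝ) ^ j := one_mul _
  have hexp : (k : ℝ) / (N : ℝ) ≤ (j : ℝ) + 1 := by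
    have hNpos : (0 : ℝ) < N := by exact_mod_cast hN1
    have hklt : k < N * (j + 1) := by
      have hr' : r < N := Nat.mod_lt _ (by omega)
      calc k = r + N * j := hkeq
        _ < N + N * j := by omega
        _ = N * (j + 1) := by ring
    have hkltR : (k : ℝ) < (N : ℝ) * ((j : ℝ) + 1) := by exact_mod_cast hklt
    rw [div_le_iff₀ hNpos]
    rw [mul_comm] at hkltR
    linarith
  have hrpow : ((1 : ℝ) / 2) ^ ((j : ℝ) + 1) ≤ (1 / 2 : ℝ) ^ ((k : ℝ) / (N : ℝ)) :=
    Real.rpow_le_rpow_of_exponent_ge (by norm_num) (by norm_num) hexp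
  have h2 : ((1 : ℝ) / 2) ^ j ≤ 2 * (1 / 2 : ℝ) ^ ((k : ℝ) / (N : ℝ)) := by
    have h3 : ((1 : ℝ) / 2) ^ ((j : ℝ) + 1) = (1 / 2 : ℝ) ^ j * (1 / 2) := by
      rw [Real.rpow_add (by norm_num), Real.rpow_natCast, Real.rpow_one]
    nlinarith [hrpow, h3]
  linarith [hnorm, h2]
end
end
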